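/- Let ρ be a subnormalized density matrix and M₁,…,M_m positive operators with M_u ≤ 1, and suppose that for each u, Tr[M_u² ρ] ≥ 1 − ε for some 0 < ε ≤ 1. Then Tr[M_m² M_{m−1}⋯M₁ ρ M₁⋯M_{m−1}] ≥ 1 − ε − 2m√ε. -/

import Mathlib

/-!
Purify `ρ = R Rᴴ` and work in the Frobenius norm, where `Tr[X ρ Xᴴ] = ‖X R‖²`. For an effect
`0 ≤ N ≤ 1` one has `N² + (1 - N)² ≤ 1`, so `Tr[N² ρ] ≥ 1 - ε` forces `‖(1 - N) R‖ ≤ √ε`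
(gentle operator lemma). Since every `M_u` is a contraction, telescoping gives
`‖(M_{m-1} ⋯ M_1 - 1) R‖ ≤ (m - 1)√ε`, hence `‖M_m M_{m-1} ⋯ M_1 R‖ ≥ ‖M_m R‖ - (m - 1)√ε`,
and squaring against `1 - ε ≤ ‖M_m R‖² ≤ 1` gives the bound.
-/

open Matrix ComplexOrder BigOperators Finset

/-- The square root of a positive semidefinite matrix, as `Matrix.PosSemidef.sqrt` was defined
in the older Mathlib (removed since). -/
noncomputable def Matrix.PosSemidef.sqrt {n : Type*} [Fintype n] [DecidableEq n]
    {A : Matrix n n ℂ} (hA : A.PosSemidef) : Matrix n n ℂ :=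
  hA.1.eigenvectorUnitary.1 * diagonal ((↑) ∘ (√·) ∘ hA.1.eigenvalues) *
    (star hA.1.eigenvectorUnitary : Matrix n n ℂ)

noncomputable def traceNorm {d : Type*} [Fintype d] [DecidableEq d] (A : Matrix d d ℂ) : ℝ :=
  ((Matrix.posSemidef_conjTranspose_mul_self A).sqrt.trace).re

noncomputable def traceDist {d : Type*} [Fintype d] [DecidableEq d] (A B : Matrix d d ℂ) : ℝ :=
  traceNorm (A - B) / 2

open scoped MatrixOrder

attribute [local instance] Matrix.frobeniusNormedAddCommGroup

theorem sq_sub_two_mul_le_sq_of_sub_le {a b t : ℝ} (ha : 0 ≤ a) (hb0 : 0 ≤ b) (hb1 : b ≤ 1)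
    (ht : 0 ≤ t) (h : b - t ≤ a) : b ^ 2 - 2 * t ≤ a ^ 2 := by
  rcases le_total b t with hbt | htb
  · nlinarith
  · nlinarith [mul_le_mul_of_nonneg_left h (sub_nonneg.2 htb)]

namespace Matrix

variable {l n k : Type*} [Fintype l] [Fintype n] [Fintype k]

theorem frobenius_norm_sq_eq_re_trace (A : Matrix l n ℂ) : ‖A‖ ^ 2 = (Aᴴ * A).trace.re := by
  change ‖WithLp.toLp 2 fun i => WithLp.toLp 2 fun j => A i j‖ ^ 2 = _
  simp only [PiLp.norm_sq_eq_of_L2, trace, diag, mul_apply, conjTranspose_apply, Complex.re_sum,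
    RCLike.star_def, Complex.conj_mul', ← Complex.ofReal_pow, Complex.ofReal_re]
  exact Finset.sum_comm

theorem frobenius_norm_mul_sq (C : Matrix l n ℂ) (X : Matrix n k ℂ) :
    ‖C * X‖ ^ 2 = (Xᴴ * (Cᴴ * C) * X).trace.re := by
  rw [frobenius_norm_sq_eq_re_trace, conjTranspose_mul]
  simp only [Matrix.mul_assoc]

theorem IsHermitian.re_trace_mul_self_mul_mul_conjTranspose {X : Matrix n n ℂ}
    (hX : X.IsHermitian) (R : Matrix n k ℂ) : (X * X * (R * Rᴴ)).trace.re = ‖X * R‖ ^ 2 := by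
  rw [frobenius_norm_mul_sq, hX.eq, Matrix.mul_assoc Rᴴ, trace_mul_comm Rᴴ]
  simp only [Matrix.mul_assoc]

theorem re_trace_conjTranspose_mul_mul_le {S T : Matrix n n ℂ} (h : T ≤ S) (X : Matrix n k ℂ) :
    (Xᴴ * T * X).trace.re ≤ (Xᴴ * S * X).trace.re := by
  have := (Complex.nonneg_iff.1 ((le_iff.1 h).conjTranspose_mul_mul_same X).trace_nonneg).1
  rw [Matrix.mul_sub, Matrix.sub_mul, trace_sub, Complex.sub_re] at this
  linarith

variable [DecidableEq n]

theorem conjTranspose_list_prod_of_isHermitian {L : List (Matrix n n ℂ)}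
    (hL : ∀ N ∈ L, N.IsHermitian) : L.prodᴴ = L.reverse.prod := by
  rw [conjTranspose_list_prod, List.map_congr_left (g := id) hL, List.map_id]

theorem PosSemidef.exists_eq_mul_conjTranspose {ρ : Matrix n n ℂ} (hρ : ρ.PosSemidef) :
    ∃ R : Matrix n n ℂ, ρ = R * Rᴴ :=
  ⟨CFC.sqrt ρ, by
    rw [(CFC.sqrt_nonneg ρ).posSemidef.isHermitian.eq, CFC.sqrt_mul_sqrt_self ρ hρ.nonneg]⟩

theorem frobenius_norm_mul_le_of_conjTranspose_mul_self_le_one {C : Matrix n n ℂ}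
    (hC : Cᴴ * C ≤ 1) (X : Matrix n k ℂ) : ‖C * X‖ ≤ ‖X‖ := by
  have h := re_trace_conjTranspose_mul_mul_le hC X
  rw [← frobenius_norm_mul_sq, Matrix.mul_one, ← frobenius_norm_sq_eq_re_trace] at h
  exact (pow_le_pow_iff_left₀ (norm_nonneg _) (norm_nonneg _) two_ne_zero).1 h

theorem frobenius_norm_list_prod_sub_one_mul_le (R : Matrix n k ℂ) {s : ℝ}
    (L : List (Matrix n n ℂ)) (hL : ∀ N ∈ L, Nᴴ * N ≤ 1 ∧ ‖(1 - N) * R‖ ≤ s) :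
    ‖(L.prod - 1) * R‖ ≤ L.length * s := by
  induction L with
  | nil => simp
  | cons N L ih =>
    obtain ⟨hN, hNs⟩ := hL N List.mem_cons_self
    have hL' := ih fun K hK => hL K (List.mem_cons_of_mem N hK)
    calc ‖((N :: L).prod - 1) * R‖ = ‖N * ((L.prod - 1) * R) - (1 - N) * R‖ := by
          simp only [List.prod_cons, Matrix.sub_mul, Matrix.mul_sub, Matrix.one_mul,
            Matrix.mul_assoc]
          abel_nf
      _ ≤ ‖N * ((L.prod - 1) * R)‖ + ‖(1 - N) * R‖ := norm_sub_le _ _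
      _ ≤ L.length * s + s :=
          add_le_add ((frobenius_norm_mul_le_of_conjTranspose_mul_self_le_one hN _).trans hL') hNs
      _ = (N :: L).length * s := by rw [List.length_cons, Nat.cast_succ]; ring

section Effect

variable {N : Matrix n n ℂ} (h0 : 0 ≤ N) (h1 : N ≤ 1)
include h0 h1

theorem sub_mul_self_nonneg : 0 ≤ N - N * N := by
  have hN := nonneg_iff_posSemidef.1 h0
  have hN1 := le_iff.1 h1
  -- `N - N² = (1 - N) N (1 - N) + N (1 - N) N`
  have h := (hN.conjTranspose_mul_mul_same (1 - N)).add (hN1.conjTranspose_mul_mul_same N)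
  rw [hN.isHermitian.eq, hN1.isHermitian.eq] at h
  exact nonneg_iff_posSemidef.2 (by convert h using 1; noncomm_ring)

theorem conjTranspose_mul_self_le_one : Nᴴ * N ≤ 1 := by
  have h := (le_iff.1 h1).add (nonneg_iff_posSemidef.1 (sub_mul_self_nonneg h0 h1))
  rw [(nonneg_iff_posSemidef.1 h0).isHermitian.eq]
  exact le_iff.2 (by convert h using 1; noncomm_ring)

theorem mul_self_add_one_sub_mul_self_le_one : N * N + (1 - N) * (1 - N) ≤ 1 := by
  have h := nonneg_iff_posSemidef.1 (sub_mul_self_nonneg h0 h1)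
  exact le_iff.2 (by convert h.add h using 1; noncomm_ring)

theorem frobenius_norm_mul_sq_add_le (R : Matrix n k ℂ) :
    ‖N * R‖ ^ 2 + ‖(1 - N) * R‖ ^ 2 ≤ ‖R‖ ^ 2 := by
  have hN := (nonneg_iff_posSemidef.1 h0).isHermitian.eq
  have h := re_trace_conjTranspose_mul_mul_le (mul_self_add_one_sub_mul_self_le_one h0 h1) R
  rw [Matrix.mul_add, Matrix.add_mul, trace_add, Complex.add_re, Matrix.mul_one] at h
  rwa [frobenius_norm_mul_sq, frobenius_norm_mul_sq, frobenius_norm_sq_eq_re_trace,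
    conjTranspose_sub, conjTranspose_one, hN]

theorem frobenius_norm_one_sub_mul_le_sqrt {R : Matrix n k ℂ} (hR : ‖R‖ ≤ 1) {ε : ℝ}
    (h : 1 - ε ≤ ‖N * R‖ ^ 2) : ‖(1 - N) * R‖ ≤ √ε :=
  Real.le_sqrt_of_sq_le (by nlinarith [frobenius_norm_mul_sq_add_le h0 h1 R, norm_nonneg R])

end Effect

theorem one_sub_sub_le_frobenius_norm_mul_list_prod_mul_sq {A : Matrix n n ℂ} {R : Matrix n k ℂ}
    {ε : ℝ} (hA0 : 0 ≤ A) (hA1 : A ≤ 1) (hR : ‖R‖ ≤ 1) (hA : 1 - ε ≤ ‖A * R‖ ^ 2)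
    (L : List (Matrix n n ℂ)) (hL : ∀ N ∈ L, 0 ≤ N ∧ N ≤ 1 ∧ 1 - ε ≤ ‖N * R‖ ^ 2) :
    1 - ε - 2 * L.length * √ε ≤ ‖A * (L.prod * R)‖ ^ 2 := by
  have hchain : ‖(L.prod - 1) * R‖ ≤ L.length * √ε :=
    frobenius_norm_list_prod_sub_one_mul_le R L fun N hN =>
      let ⟨h0, h1, hN⟩ := hL N hN
      ⟨conjTranspose_mul_self_le_one h0 h1, frobenius_norm_one_sub_mul_le_sqrt h0 h1 hR hN⟩
  have hA' := conjTranspose_mul_self_le_one hA0 hA1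
  have htri : ‖A * R‖ - L.length * √ε ≤ ‖A * (L.prod * R)‖ := by
    have hdiff : A * (L.prod * R) - A * R = A * ((L.prod - 1) * R) := by
      rw [Matrix.sub_mul, Matrix.one_mul, Matrix.mul_sub]
    have := norm_sub_norm_le (A * R) (A * (L.prod * R))
    rw [norm_sub_rev, hdiff] at this
    linarith [frobenius_norm_mul_le_of_conjTranspose_mul_self_le_one hA' ((L.prod - 1) * R)]
  have := sq_sub_two_mul_le_sq_of_sub_le (norm_nonneg _) (norm_nonneg _)
    ((frobenius_norm_mul_le_of_conjTranspose_mul_self_le_one hA' R).trans hR) (by positivity) htri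
  linarith

end Matrix

theorem bisection_chain_success_general {d : Type*} [Fintype d] [DecidableEq d]
    (ρ : Matrix d d ℂ) (hρ : ρ.PosSemidef) (hρtr : (ρ.trace).re ≤ 1)
    (m : ℕ) (M : Fin (m + 1) → Matrix d d ℂ)
    (hM : ∀ u, (M u).PosSemidef) (hM1 : ∀ u, ((1 : Matrix d d ℂ) - M u).PosSemidef)
    (ε : ℝ) (h : ∀ u, ((M u * M u * ρ).trace).re ≥ 1 - ε) :
    ((M (Fin.last m) * M (Fin.last m) *
        ((List.ofFn fun i : Fin m => M i.castSucc).reverse.prod * ρ *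
          (List.ofFn fun i : Fin m => M i.castSucc).prod)).trace).re ≥
      1 - ε - 2 * (m + 1) * Real.sqrt ε := by
  obtain ⟨R, rfl⟩ := hρ.exists_eq_mul_conjTranspose
  set L := (List.ofFn fun i : Fin m => M i.castSucc).reverse
  have hL : ∀ N ∈ L, ∃ u, M u = N := fun N hN =>
    let ⟨i, hi⟩ := List.mem_ofFn.1 (List.mem_reverse.1 hN)
    ⟨i.castSucc, hi⟩
  have hR : ‖R‖ ≤ 1 := by
    rwa [← sq_le_one_iff₀ (norm_nonneg R), frobenius_norm_sq_eq_re_trace, trace_mul_comm]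
  have hsucc u : 1 - ε ≤ ‖M u * R‖ ^ 2 := by
    rw [← (hM u).isHermitian.re_trace_mul_self_mul_mul_conjTranspose]; exact h u
  have hconj : L.prod * (R * Rᴴ) * L.reverse.prod = L.prod * R * (L.prod * R)ᴴ := by
    rw [conjTranspose_mul, conjTranspose_list_prod_of_isHermitian fun N hN => by
      obtain ⟨u, rfl⟩ := hL N hN; exact (hM u).isHermitian]
    simp only [Matrix.mul_assoc]
  rw [← List.reverse_reverse (List.ofFn _), hconj,
    (hM _).isHermitian.re_trace_mul_self_mul_mul_conjTranspose, ge_iff_le]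
  have hbound := one_sub_sub_le_frobenius_norm_mul_list_prod_mul_sq (hM (Fin.last m)).nonneg
    (hM1 _) hR (hsucc _) L fun N hN => by
      obtain ⟨u, rfl⟩ := hL N hN; exact ⟨(hM u).nonneg, hM1 u, hsucc u⟩
  simp only [L, List.length_reverse, List.length_ofFn] at hbound
  linarith [Real.sqrt_nonneg ε]

/-- If each measurement succeeds with probability at least 1 − ε on ρ, then the
whole chain of m+1 measurements succeeds with probability at least 1 − ε − 2(m+1)√ε. -/
theorem bisection_chain_success {d : Type*} [Fintype d] [DecidableEq d]
    (ρ : Matrix d d ℂ) (hρ : ρ.PosSemidef) (hρtr : (ρ.trace).re ≤ 1)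
    (m : ℕ) (M : Fin (m + 1) → Matrix d d ℂ)
    (hM : ∀ u, (M u).PosSemidef) (hM1 : ∀ u, ((1 : Matrix d d ℂ) - M u).PosSemidef)
    (ε : ℝ) (hε : 0 < ε) (hε1 : ε ≤ 1)
    (h : ∀ u, ((M u * M u * ρ).trace).re ≥ 1 - ε) :
    ((M (Fin.last m) * M (Fin.last m) *
        ((List.ofFn fun i : Fin m => M i.castSucc).reverse.prod * ρ *
          (List.ofFn fun i : Fin m => M i.castSucc).prod)).trace).re ≥
      1 - ε - 2 * (m + 1) * Real.sqrt ε :=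
  bisection_chain_success_general ρ hρ hρtr m M hM hM1 ε h
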